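/- arXiv:1503.03239 — 4 statements merged into one kernel-verified Lean document; each statement's English description precedes it below -/
import Mathlib

section
/- Let (u_i)_{i∈ℤ} be a real sequence with finite total variation, updated by v_i = u_i + α_{i+1/2}(u_{i+1} − u_i) − β_{i-1/2}(u_i − u_{i-1}). If α_{i+1/2} ≥ 0, β_{i+1/2} ≥ 0 and α_{i+1/2} + β_{i+1/2} ≤ 1 for all i, then ∑_i |v_{i+1} − v_i| ≤ ∑_i |u_{i+1} − u_i|. -/
/-- Harten's lemma: a scheme in incremental form
`vᵢ = uᵢ + α_{i+1/2}(uᵢ₊₁ − uᵢ) − β_{i−1/2}(uᵢ − uᵢ₋₁)`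
with `α ≥ 0`, `β ≥ 0` and `α + β ≤ 1` at each interface is TVD.
Here `α i` denotes `α_{i+1/2}` and `β i` denotes `β_{i+1/2}`. -/
theorem harten_lemma_tvd (u v α β : ℤ → ℝ)
    (hα : ∀ i, 0 ≤ α i) (hβ : ∀ i, 0 ≤ β i)
    (hαβ : ∀ i, α i + β i ≤ 1)
    (hv : ∀ i, v i = u i + α i * (u (i + 1) - u i) - β (i - 1) * (u i - u (i - 1)))
    (hTV : Summable fun i => |u (i + 1) - u i|) :
    (∑' i : ℤ, |v (i + 1) - v i|) ≤ ∑' i : ℤ, |u (i + 1) - u i| := by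
  set w : ℤ → ℝ := fun i => |u (i + 1) - u i| with hw
  have hwnn : ∀ i, (0:ℝ) ≤ w i := fun i => abs_nonneg _
  have hS1 : Summable (fun i => (1 - α i - β i) * w i) := by
    refine Summable.of_nonneg_of_le
      (fun i => mul_nonneg (by linarith [hαβ i]) (hwnn i)) (fun i => ?_) hTV
    nlinarith [hα i, hβ i, hwnn i]
  have hSα : Summable (fun i => α i * w i) := by
    refine Summable.of_nonneg_of_le
      (fun i => mul_nonneg (hα i) (hwnn i)) (fun i => ?_) hTV
    exact mul_le_of_le_one_left (hwnn i) (by linarith [hαβ i, hβ i])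
  have hSβ : Summable (fun i => β i * w i) := by
    refine Summable.of_nonneg_of_le
      (fun i => mul_nonneg (hβ i) (hwnn i)) (fun i => ?_) hTV
    exact mul_le_of_le_one_left (hwnn i) (by linarith [hαβ i, hα i])
  have hSα' : Summable (fun i => α (i + 1) * w (i + 1)) :=
    ((Equiv.addRight (1:ℤ)).summable_iff (f := fun i => α i * w i)).2 hSα
  have hSβ' : Summable (fun i => β (i - 1) * w (i - 1)) :=
    ((Equiv.subRight (1:ℤ)).summable_iff (f := fun i => β i * w i)).2 hSβ
  have key : ∀ i, |v (i + 1) - v i| ≤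
      (1 - α i - β i) * w i + α (i + 1) * w (i + 1) + β (i - 1) * w (i - 1) := by
    intro i
    have h1 := hv (i + 1)
    have h2 := hv i
    have e1 : i + 1 - 1 = i := by ring
    rw [e1] at h1
    have hd : v (i + 1) - v i =
        (1 - α i - β i) * (u (i + 1) - u i) + α (i + 1) * (u (i + 1 + 1) - u (i + 1))
          + β (i - 1) * (u i - u (i - 1)) := by
      rw [h1, h2]; ring
    have ew : w (i - 1) = |u i - u (i - 1)| := by
      have : i - 1 + 1 = i := by ring
      simp [hw, this]
    calc |v (i + 1) - v i|
        ≤ |(1 - α i - β i) * (u (i + 1) - u i)| + |α (i + 1) * (u (i + 1 + 1) - u (i + 1))|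
            + |β (i - 1) * (u i - u (i - 1))| := by
          rw [hd]; exact (abs_add_le _ _).trans (by gcongr; exact abs_add_le _ _)
      _ = (1 - α i - β i) * w i + α (i + 1) * w (i + 1) + β (i - 1) * w (i - 1) := by
          rw [abs_mul, abs_mul, abs_mul, ew,
            abs_of_nonneg (by linarith [hαβ i] : (0:ℝ) ≤ 1 - α i - β i),
            abs_of_nonneg (hα (i + 1)), abs_of_nonneg (hβ (i - 1))]
  have hg : Summable (fun i => (1 - α i - β i) * w i + α (i + 1) * w (i + 1)
      + β (i - 1) * w (i - 1)) := (hS1.add hSα').add hSβ'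
  have hSv : Summable (fun i => |v (i + 1) - v i|) :=
    Summable.of_nonneg_of_le (fun i => abs_nonneg _) key hg
  calc (∑' i : ℤ, |v (i + 1) - v i|)
      ≤ ∑' i, ((1 - α i - β i) * w i + α (i + 1) * w (i + 1) + β (i - 1) * w (i - 1)) :=
        Summable.tsum_le_tsum key hSv hg
    _ = (∑' i, (1 - α i - β i) * w i) + (∑' i, α (i + 1) * w (i + 1))
          + ∑' i, β (i - 1) * w (i - 1) := by
        rw [Summable.tsum_add (hS1.add hSα') hSβ', Summable.tsum_add hS1 hSα']
    _ = (∑' i, (1 - α i - β i) * w i) + (∑' i, α i * w i) + ∑' i, β i * w i := by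
        have tα : (∑' i, α (i + 1) * w (i + 1)) = ∑' i, α i * w i :=
          (Equiv.addRight (1:ℤ)).tsum_eq (fun i => α i * w i)
        have tβ : (∑' i, β (i - 1) * w (i - 1)) = ∑' i, β i * w i :=
          (Equiv.subRight (1:ℤ)).tsum_eq (fun i => β i * w i)
        rw [tα, tβ]
    _ = ∑' i, ((1 - α i - β i) * w i + α i * w i + β i * w i) := by
        rw [Summable.tsum_add (hS1.add hSα) hSβ, Summable.tsum_add hS1 hSα]
    _ = ∑' i, w i := by
        refine tsum_congr fun i => by ring
end

section
/- For the linear advection Lax–Wendroff scheme u_i^{n+1} = u_i − (ν/2)(1−ν)Δ_+u_i − (ν/2)(1+ν)Δ_-u_i with CFL number ν = λa ∈ (0,1], the update at index i can be written in the form u_i^{n+1} = u_i − D·Δ_-u_i with 0 ≤ D ≤ 1 if and only if the gradient ratio r_i = Δ_-u_i/Δ_+u_i (with Δ_+u_i ≠ 0) satisfies r_i ≤ κ_1(ν) or r_i ≥ γ_1(ν), where κ_1(ν) = −(1−ν)/(1+ν) and γ_1(ν) = ν/(2+ν). -/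
lemma lw_key (ν r : ℝ) (hν : 0 < ν) (hν1 : ν < 1) (hr : r ≠ 0) :
    (∃ D : ℝ, 0 ≤ D ∧ D ≤ 1 ∧ D * r = ν/2*(1-ν) + ν/2*(1+ν)*r) ↔
      (r ≤ -(1-ν)/(1+ν) ∨ ν/(2+ν) ≤ r) := by
  constructor
  · rintro ⟨D, hD0, hD1, hEq⟩
    rcases hr.lt_or_gt with hrneg | hrpos
    · left
      rw [le_div_iff₀ (by linarith : (0:ℝ) < 1+ν)]
      nlinarith [mul_nonpos_of_nonneg_of_nonpos hD0 hrneg.le]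
    · right
      rw [div_le_iff₀ (by linarith : (0:ℝ) < 2+ν)]
      nlinarith [mul_le_of_le_one_left hrpos.le hD1]
  · rintro (h | h)
    · have hrneg : r < 0 := by
        have : -(1-ν)/(1+ν) < 0 := div_neg_of_neg_of_pos (by linarith) (by linarith)
        linarith
      refine ⟨ν/2*(1-ν)/r + ν/2*(1+ν), ?_, ?_, by field_simp⟩
      · rw [le_div_iff₀ (by linarith : (0:ℝ) < 1+ν)] at h
        rw [← sub_nonneg]
        have h2 : ν/2*(1-ν)/r + ν/2*(1+ν) - 0 = (ν/2*(1-ν) + ν/2*(1+ν)*r)/r := by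
          field_simp; ring
        rw [h2, div_nonneg_iff]
        right
        constructor <;> nlinarith
      · have h1 : ν/2*(1-ν)/r ≤ 0 :=
          div_nonpos_of_nonneg_of_nonpos (by nlinarith) hrneg.le
        nlinarith
    · have hrpos : 0 < r := lt_of_lt_of_le (by positivity) h
      refine ⟨ν/2*(1-ν)/r + ν/2*(1+ν), ?_, ?_, by field_simp⟩
      · have : 0 ≤ ν/2*(1-ν)/r := div_nonneg (by nlinarith) hrpos.le
        nlinarith
      · rw [div_le_iff₀ (by linarith : (0:ℝ) < 2+ν)] at h
        rw [← sub_nonneg]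
        have h2 : 1 - (ν/2*(1-ν)/r + ν/2*(1+ν)) = (r*(1 - ν/2*(1+ν)) - ν/2*(1-ν))/r := by
          field_simp; ring
        rw [h2]
        apply div_nonneg _ hrpos.le
        nlinarith

/-- The Lax–Wendroff update for linear advection with CFL number `ν ∈ (0,1)`
can be written as `uᵢ − D·Δ₋uᵢ` with `0 ≤ D ≤ 1` iff the gradient ratio
`r = Δ₋uᵢ/Δ₊uᵢ` satisfies `r ≤ κ₁(ν)` or `r ≥ γ₁(ν)`. -/
theorem laxWendroff_tvd_iff (ν uim1 ui uip1 : ℝ)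
    (hν : 0 < ν) (hν1 : ν < 1)
    (hp : uip1 - ui ≠ 0) (hm : ui - uim1 ≠ 0) :
    (∃ D : ℝ, 0 ≤ D ∧ D ≤ 1 ∧
        ui - ν / 2 * (1 - ν) * (uip1 - ui) - ν / 2 * (1 + ν) * (ui - uim1)
          = ui - D * (ui - uim1)) ↔
      ((ui - uim1) / (uip1 - ui) ≤ -(1 - ν) / (1 + ν) ∨
        ν / (2 + ν) ≤ (ui - uim1) / (uip1 - ui)) := by
  have hr : (ui - uim1) / (uip1 - ui) ≠ 0 := div_ne_zero hm hp
  rw [← lw_key ν _ hν hν1 hr]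
  apply exists_congr
  intro D
  have step :
      (ui - ν / 2 * (1 - ν) * (uip1 - ui) - ν / 2 * (1 + ν) * (ui - uim1)
          = ui - D * (ui - uim1)) ↔
      D * ((ui - uim1)/(uip1 - ui))
          = ν/2*(1-ν) + ν/2*(1+ν)*((ui - uim1)/(uip1 - ui)) := by
    rw [← mul_div_assoc,
      show ν/2*(1-ν) + ν/2*(1+ν)*((ui - uim1)/(uip1 - ui))
          = (ν/2*(1-ν)*(uip1 - ui) + ν/2*(1+ν)*(ui - uim1))/(uip1 - ui) from by
        field_simp,
      div_left_inj' hp]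
    constructor <;> intro h <;> linarith
  rw [step]
end

section
/- In particular, for any CFL number ν ∈ (0,1], every negative gradient ratio r < κ_1(ν) = −(1−ν)/(1+ν) lies in the Lax–Wendroff TVD region; hence for r ≤ −1 (which includes all extrema where Δ_+u·Δ_-u < 0 and |Δ_-u| ≥ |Δ_+u| appropriately), the second-order Lax–Wendroff update satisfies the local maximum principle. -/
/-- For any CFL number `ν ∈ (0,1]`, every gradient ratio `r < κ₁(ν)` lies in
the Lax–Wendroff TVD region; and for `r ≤ −1` the Lax–Wendroff coefficient
`D = (ν/2)(1−ν)/r + (ν/2)(1+ν)` lies in `[0,1]`, i.e. the update satisfies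
the local maximum principle. -/
theorem extrema_laxWendroff_lmp (ν : ℝ) (hν : 0 < ν) (hν1 : ν ≤ 1) :
    (∀ r : ℝ, r < -(1 - ν) / (1 + ν) →
        (r ≤ -(1 - ν) / (1 + ν) ∨ ν / (2 + ν) ≤ r)) ∧
    (∀ r : ℝ, r ≤ -1 →
        0 ≤ ν / 2 * (1 - ν) / r + ν / 2 * (1 + ν) ∧
        ν / 2 * (1 - ν) / r + ν / 2 * (1 + ν) ≤ 1) := by
  constructor
  · intro r hr; exact Or.inl hr.le
  · intro r hr
    have hr0 : r < 0 := lt_of_le_of_lt hr (by norm_num)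
    have hinv1 : -1 ≤ r⁻¹ := by
      rw [← one_div, le_div_iff_of_neg hr0]
      linarith
    have hinv0 : r⁻¹ < 0 := inv_neg''.mpr hr0
    rw [div_eq_mul_inv]
    constructor <;> nlinarith [mul_nonneg hν.le (sub_nonneg.mpr hν1)]
end

section
/- For every ν ∈ (0,1), the intersection of the Lax–Wendroff TVD region {r : r ≤ κ_1(ν) or r ≥ γ_1(ν)} and the Beam–Warming TVD region [κ_2(ν), γ_2(ν)] is nonempty; in fact it contains the interval [γ_1(ν), 3] ∪ [−1, κ_1(ν)]. -/
/-- For every `ν ∈ (0,1)`, the intersection of the Lax–Wendroff TVD region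
and the Beam–Warming TVD interval is nonempty and contains
`[γ₁(ν), 3] ∪ [−1, κ₁(ν)]`. -/
theorem fromm_tvd_region_nonempty (ν : ℝ) (hν : 0 < ν) (hν1 : ν < 1) :
    ({r : ℝ | r ≤ -(1 - ν) / (1 + ν) ∨ ν / (2 + ν) ≤ r} ∩
        Set.Icc (-(2 - ν) / ν) ((3 - ν) / (1 - ν))).Nonempty ∧
    (Set.Icc (ν / (2 + ν)) 3 ∪ Set.Icc (-1) (-(1 - ν) / (1 + ν))) ⊆
      {r : ℝ | r ≤ -(1 - ν) / (1 + ν) ∨ ν / (2 + ν) ≤ r} ∩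
        Set.Icc (-(2 - ν) / ν) ((3 - ν) / (1 - ν)) := by
  have h2ν : (0:ℝ) < 2 + ν := by linarith
  have h1ν : (0:ℝ) < 1 + ν := by linarith
  have h1ν' : (0:ℝ) < 1 - ν := by linarith
  have hγ1 : ν / (2 + ν) ≤ 1 := by
    rw [div_le_one h2ν]; linarith
  have hγ1' : 0 ≤ ν / (2 + ν) := div_nonneg hν.le h2ν.le
  have hκ1 : -(1 - ν) / (1 + ν) ≤ 0 := by
    apply div_nonpos_of_nonpos_of_nonneg <;> linarith
  have hκ2 : -(2 - ν) / ν ≤ -1 := by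
    rw [div_le_iff₀ hν]; linarith
  have hγ2 : (3:ℝ) ≤ (3 - ν) / (1 - ν) := by
    rw [le_div_iff₀ h1ν']; linarith
  constructor
  · exact ⟨1, Or.inr hγ1, ⟨by linarith, by linarith⟩⟩
  · rintro r (⟨h1, h2⟩ | ⟨h1, h2⟩)
    · exact ⟨Or.inr h1, ⟨by linarith, by linarith⟩⟩
    · exact ⟨Or.inl h2, ⟨by linarith, by linarith⟩⟩
end
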